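/- arXiv:1611.08529 — 5 statements merged into one kernel-verified Lean document; each statement's English description precedes it below -/
import Mathlib

section
/- Let O be a discrete valuation ring with uniformizer π and fraction field K, let V be an r-dimensional K-vector space, and let M₁, M₂, M₃ be lattices in V. Then Pos(M₁,M₃) ≤ Pos(M₁,M₂) + Pos(M₂,M₃) in the dominance order, where + denotes componentwise addition of the decreasing integer r-tuples; explicitly, for every 1 ≤ k ≤ r, Σ_{i=1}^k Pos(M₁,M₃)_i ≤ Σ_{i=1}^k (Pos(M₁,M₂)_i + Pos(M₂,M₃)_i), with equality when k = r. -/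
/-!
Work in the basis `g` adapted to `(M₁, M₃)`. Passing from `g` to `(π^{-a₁₃ i} g_i)` through the
bases adapted to `(M₁, M₂)` and to `(M₂, M₃)` factors `diag(π^{-a₁₃})` as
`P · diag(π^{-a₁₂}) · Q · diag(π^{-a₂₃}) · R` with `P, Q, R ∈ GLᵣ(O)`, since each of the three
remaining changes of basis is between two bases of one lattice. By a Cauchy–Binet expansion,
multiplying by an integral matrix keeps all `k × k` minors in `π^n O`, while multiplying by
`diag(π^{-a})` with `a` decreasing moves them into `π^{n - (a₁ + ⋯ + a_k)} O`. The leading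
`k × k` minor of `diag(π^{-a₁₃})` is `π^{-((a₁₃)₁ + ⋯ + (a₁₃)_k)}`, which gives the inequalities;
taking determinants, `det P · det Q · det R` is a unit of `O`, which gives the equality.
-/

open Finset

/-- `M` and `N` are the `O`-lattices spanned by `(e i)` and `(π^{-a i} • e i)` respectively,
i.e. the basis `e` is adapted to `(M, N)` with relative position `a`. -/
def IsAdaptedBasis {O K V : Type*} [CommRing O] [Field K] [Algebra O K]
    [AddCommGroup V] [Module K V] [Module O V] [IsScalarTower O K V]
    (π : O) {r : ℕ} (M N : Submodule O V) (e : Module.Basis (Fin r) K V) (a : Fin r → ℤ) : Prop :=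
  M = Submodule.span O (Set.range fun i => e i) ∧
    N = Submodule.span O (Set.range fun i => (algebraMap O K π) ^ (-(a i)) • e i)

open Matrix Module

theorem zpow_sum₀ {G ι : Type*} [CommGroupWithZero G] {x : G} (hx : x ≠ 0) (s : Finset ι)
    (n : ι → ℤ) : x ^ (∑ i ∈ s, n i) = ∏ i ∈ s, x ^ n i := by
  classical
  induction s using Finset.induction_on with
  | empty => simp
  | insert j s hj ih => rw [sum_insert hj, prod_insert hj, zpow_add₀ hx, ih]

theorem Fin.val_le_val_of_strictMono {k r : ℕ} {f : Fin k → Fin r} (hf : StrictMono f)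
    (i : Fin k) : (i : ℕ) ≤ f i := by
  have := card_le_card_of_injOn f (s := Iic i) (t := Iic (f i))
    (fun j hj => by simpa using hf.monotone (by simpa using hj)) hf.injective.injOn
  simpa [Fin.card_Iic] using this

theorem Fin.sum_comp_le_sum_castLE {M : Type*} [AddCommMonoid M] [PartialOrder M]
    [IsOrderedAddMonoid M] {k r : ℕ} (hk : k ≤ r) {a : Fin r → M} (ha : Antitone a)
    {p : Fin k → Fin r} (hp : Function.Injective p) :
    ∑ i, a (p i) ≤ ∑ i, a (Fin.castLE hk i) := by
  have hcard : #(univ.image p) = k := by simp [card_image_of_injective _ hp]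
  set φ := (univ.image p).orderEmbOfFin hcard
  calc ∑ i, a (p i) = ∑ j ∈ univ.image p, a j := (sum_image fun _ _ _ _ h => hp h).symm
    _ = ∑ i, a (φ i) := by
      rw [← image_orderEmbOfFin_univ _ hcard, sum_image fun _ _ _ _ h => φ.injective h]
    _ ≤ ∑ i, a (Fin.castLE hk i) :=
      sum_le_sum fun i _ => ha (Fin.le_def.mpr (Fin.val_le_val_of_strictMono φ.strictMono i))

theorem Fin.sum_filter_val_lt {M : Type*} [AddCommMonoid M] {k r : ℕ} (hk : k ≤ r)
    (a : Fin r → M) :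
    ∑ i ∈ univ.filter (fun i : Fin r => (i : ℕ) < k), a i = ∑ i, a (Fin.castLE hk i) := by
  have : univ.filter (fun i : Fin r => (i : ℕ) < k) = univ.map (Fin.castLEEmb hk) := by
    ext i
    simp only [mem_filter, mem_univ, true_and, mem_map, Fin.castLEEmb_apply]
    exact ⟨fun h => ⟨⟨i, h⟩, rfl⟩, by rintro ⟨j, rfl⟩; exact j.isLt⟩
  rw [this, sum_map]
  rfl

/-- Cauchy–Binet, summed over all maps `w` rather than over `k`-subsets: the terms with `w`
not injective vanish. -/
theorem Matrix.det_mul_eq_sum_det_submatrix_mul_prod {R κ m : Type*} [CommRing R] [Fintype κ]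
    [DecidableEq κ] [Fintype m] (A : Matrix κ m R) (B : Matrix m κ R) :
    (A * B).det = ∑ w : κ → m, (A.submatrix id w).det * ∏ i, B (w i) i := by
  simp only [det_apply', mul_apply, prod_univ_sum, mul_sum, Fintype.piFinset_univ]
  rw [sum_comm]
  refine sum_congr rfl fun w _ => ?_
  rw [sum_mul]
  refine sum_congr rfl fun σ _ => ?_
  simp only [submatrix_apply, id_eq, prod_mul_distrib]
  ring

theorem Matrix.det_submatrix_eq_zero_of_not_injective {R κ m l : Type*} [CommRing R] [Fintype κ]
    [DecidableEq κ] (A : Matrix m l R) (p : κ → m) {q : κ → l} (hq : ¬Function.Injective q) :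
    (A.submatrix p q).det = 0 := by
  obtain ⟨i, j, hij, hne⟩ := Function.not_injective_iff.mp hq
  exact det_zero_of_column_eq hne fun l => by simp [hij]

section ZpowSpan

variable {O : Type*} (K : Type*) [CommRing O] [Field K] [Algebra O K]

def zpowSpan (π : O) (n : ℤ) : Submodule O K :=
  Submodule.span O {algebraMap O K π ^ n}

variable {K} {π : O}

theorem zpow_mem_zpowSpan (n : ℤ) : algebraMap O K π ^ n ∈ zpowSpan K π n :=
  Submodule.subset_span rfl

theorem algebraMap_mem_zpowSpan_zero (y : O) : algebraMap O K y ∈ zpowSpan K π 0 :=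
  Submodule.mem_span_singleton.mpr ⟨y, by simp [Algebra.smul_def]⟩

theorem mul_mem_zpowSpan (hπ : algebraMap O K π ≠ 0) {m n : ℤ} {x y : K}
    (hx : x ∈ zpowSpan K π m) (hy : y ∈ zpowSpan K π n) : x * y ∈ zpowSpan K π (m + n) := by
  obtain ⟨a, rfl⟩ := Submodule.mem_span_singleton.mp hx
  obtain ⟨b, rfl⟩ := Submodule.mem_span_singleton.mp hy
  refine Submodule.mem_span_singleton.mpr ⟨a * b, ?_⟩
  simp only [Algebra.smul_def, map_mul, zpow_add₀ hπ]
  ring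

theorem zpowSpan_antitone (hπ : algebraMap O K π ≠ 0) : Antitone (zpowSpan K π) := by
  intro m n hmn
  rw [zpowSpan, Submodule.span_singleton_le_iff_mem]
  refine Submodule.mem_span_singleton.mpr ⟨π ^ (n - m).toNat, ?_⟩
  rw [Algebra.smul_def, map_pow, ← zpow_natCast, Int.toNat_of_nonneg (sub_nonneg.2 hmn),
    ← zpow_add₀ hπ, sub_add_cancel]

theorem le_of_zpow_mem_zpowSpan (hinj : Function.Injective (algebraMap O K))
    (hπu : ¬IsUnit π) (hπ : algebraMap O K π ≠ 0) {m n : ℤ}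
    (h : algebraMap O K π ^ m ∈ zpowSpan K π n) : n ≤ m := by
  by_contra! hlt
  obtain ⟨y, hy⟩ := Submodule.mem_span_singleton.mp h
  rw [Algebra.smul_def] at hy
  have hunit : π ^ (n - m).toNat * y = 1 := hinj <| by
    rw [map_mul, map_pow, map_one, ← zpow_natCast, Int.toNat_of_nonneg (by omega),
      zpow_sub₀ hπ, div_mul_eq_mul_div, mul_comm, hy, div_self (zpow_ne_zero _ hπ)]
  exact hπu ((isUnit_pow_iff (n := (n - m).toNat) (by omega)).mp
    (IsUnit.of_mul_eq_one _ hunit))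

end ZpowSpan

section Minors

variable {O K : Type*} [CommRing O] [Field K] [Algebra O K] {π : O}

def MinorsIn (π : O) (k : ℕ) (n : ℤ) {m l : Type*} (A : Matrix m l K) : Prop :=
  ∀ (p : Fin k → m) (q : Fin k → l), (A.submatrix p q).det ∈ zpowSpan K π n

theorem minorsIn_map {m l : Type*} (k : ℕ) (T : Matrix m l O) :
    MinorsIn π k 0 (T.map (algebraMap O K)) := fun p q => by
  rw [submatrix_map, ← RingHom.mapMatrix_apply, ← RingHom.map_det]
  exact algebraMap_mem_zpowSpan_zero _

theorem MinorsIn.mul_map {m l l' : Type*} [Fintype l] {k : ℕ} {n : ℤ} {A : Matrix m l K}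
    (hA : MinorsIn π k n A) (T : Matrix l l' O) :
    MinorsIn π k n (A * T.map (algebraMap O K)) := fun p q => by
  rw [submatrix_mul _ _ p id q Function.bijective_id, det_mul_eq_sum_det_submatrix_mul_prod]
  refine Submodule.sum_mem _ fun w _ => ?_
  have hprod : ∏ i, (T.map (algebraMap O K)).submatrix id q (w i) i =
      algebraMap O K (∏ i, T (w i) (q i)) := by simp [map_prod]
  rw [hprod, mul_comm, ← Algebra.smul_def, submatrix_submatrix]
  exact Submodule.smul_mem _ _ (hA p w)

theorem MinorsIn.mul_diagonal_zpow (hπ : algebraMap O K π ≠ 0) {m : Type*} {k r : ℕ}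
    (hk : k ≤ r) {n : ℤ} {A : Matrix m (Fin r) K} (hA : MinorsIn π k n A) {a : Fin r → ℤ}
    (ha : Antitone a) :
    MinorsIn π k (n - ∑ i, a (Fin.castLE hk i))
      (A * diagonal fun i => algebraMap O K π ^ (-a i)) := fun p q => by
  by_cases hq : Function.Injective q
  · have hsub : (A * diagonal fun i => algebraMap O K π ^ (-a i)).submatrix p q =
        A.submatrix p q * diagonal fun i => algebraMap O K π ^ (-a (q i)) := by
      ext i j; simp [mul_diagonal]
    rw [hsub, det_mul, det_diagonal, ← zpow_sum₀ hπ, sub_eq_add_neg]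
    refine zpowSpan_antitone hπ ?_ (mul_mem_zpowSpan hπ (hA p q) (zpow_mem_zpowSpan _))
    rw [sum_neg_distrib]
    linarith [Fin.sum_comp_le_sum_castLE hk ha hq]
  · rw [det_submatrix_eq_zero_of_not_injective _ _ hq]
    exact zero_mem _

end Minors

section Basis

variable {O K V ι : Type*} [CommRing O] [Field K] [Algebra O K] [AddCommGroup V] [Module K V]
  [Module O V] [IsScalarTower O K V]

theorem Module.Basis.exists_toMatrix_eq_map_of_mem_span [Fintype ι] (b : Basis ι K V) {ι' : Type*}
    {v : ι' → V} (hv : ∀ j, v j ∈ Submodule.span O (Set.range b)) :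
    ∃ T : Matrix ι ι' O, b.toMatrix v = T.map (algebraMap O K) := by
  choose c hc using fun j => (Submodule.mem_span_range_iff_exists_fun O).mp (hv j)
  refine ⟨.of fun i j => c j i, ?_⟩
  ext i j
  simp_rw [toMatrix_apply, ← hc j, ← algebraMap_smul K (c j _) (b _), b.repr_sum_self]
  rfl

theorem Module.Basis.exists_isUnit_det_toMatrix_eq_map [Fintype ι] [DecidableEq ι]
    (hinj : Function.Injective (algebraMap O K)) {b c : Basis ι K V}
    (h : Submodule.span O (Set.range b) = Submodule.span O (Set.range c)) :
    ∃ T : Matrix ι ι O, IsUnit T.det ∧ b.toMatrix c = T.map (algebraMap O K) := by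
  obtain ⟨T, hT⟩ := b.exists_toMatrix_eq_map_of_mem_span (v := c) fun j => by
    rw [h]; exact Submodule.subset_span (Set.mem_range_self j)
  obtain ⟨T', hT'⟩ := c.exists_toMatrix_eq_map_of_mem_span (v := b) fun j => by
    rw [← h]; exact Submodule.subset_span (Set.mem_range_self j)
  refine ⟨T, isUnit_det_of_right_inverse (B := T') (map_injective hinj ?_), hT⟩
  dsimp only
  rw [Matrix.map_mul, ← hT, ← hT', b.toMatrix_mul_toMatrix_flip,
    Matrix.map_one _ (map_zero _) (map_one _)]

noncomputable def Module.Basis.zpowSMul (e : Basis ι K V) {x : K} (hx : x ≠ 0) (a : ι → ℤ) :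
    Basis ι K V :=
  e.unitsSMul fun i => Units.mk0 x hx ^ (-a i)

theorem Module.Basis.coe_zpowSMul (e : Basis ι K V) {x : K} (hx : x ≠ 0) (a : ι → ℤ) :
    ⇑(e.zpowSMul hx a) = fun i => x ^ (-a i) • e i := by
  funext i
  simp [zpowSMul, unitsSMul_apply, Units.smul_def]

theorem Module.Basis.toMatrix_zpowSMul [DecidableEq ι] (e : Basis ι K V) {x : K} (hx : x ≠ 0)
    (a : ι → ℤ) : e.toMatrix (e.zpowSMul hx a) = diagonal fun i => x ^ (-a i) := by
  simp [zpowSMul, Function.comp_def]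

end Basis

section Factorization

variable {O K : Type*} [CommRing O] [Field K] [Algebra O K] {π : O}

theorem eq_of_zpow_eq_algebraMap_mul_zpow (hinj : Function.Injective (algebraMap O K))
    (hπu : ¬IsUnit π) (hπ : algebraMap O K π ≠ 0) {m n : ℤ} {u : Oˣ}
    (h : algebraMap O K π ^ m = algebraMap O K u * algebraMap O K π ^ n) : m = n := by
  have hmn : algebraMap O K π ^ m ∈ zpowSpan K π n := by
    rw [h, ← Algebra.smul_def]
    exact Submodule.smul_mem _ _ (zpow_mem_zpowSpan n)
  have hnm : algebraMap O K π ^ n ∈ zpowSpan K π m := by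
    rw [← one_mul (_ ^ n), ← map_one (algebraMap O K), ← u.inv_mul, map_mul, mul_assoc, ← h,
      ← Algebra.smul_def]
    exact Submodule.smul_mem _ _ (zpow_mem_zpowSpan m)
  exact le_antisymm (le_of_zpow_mem_zpowSpan hinj hπu hπ hnm)
    (le_of_zpow_mem_zpowSpan hinj hπu hπ hmn)

theorem sum_castLE_le_of_diagonal_eq_mul (hinj : Function.Injective (algebraMap O K))
    (hπu : ¬IsUnit π) (hπ : algebraMap O K π ≠ 0) {r : ℕ} {a b c : Fin r → ℤ}
    (ha : Antitone a) (hb : Antitone b) {P Q R : Matrix (Fin r) (Fin r) O}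
    (h : diagonal (fun i => algebraMap O K π ^ (-c i)) =
      P.map (algebraMap O K) * diagonal (fun i => algebraMap O K π ^ (-a i)) *
        Q.map (algebraMap O K) * diagonal (fun i => algebraMap O K π ^ (-b i)) *
          R.map (algebraMap O K))
    {k : ℕ} (hk : k ≤ r) :
    ∑ i, c (Fin.castLE hk i) ≤ ∑ i, a (Fin.castLE hk i) + ∑ i, b (Fin.castLE hk i) := by
  have hminors := ((((minorsIn_map k P).mul_diagonal_zpow hπ hk ha).mul_map Q).mul_diagonal_zpow
    hπ hk hb).mul_map R
  have hlead := hminors (Fin.castLE hk) (Fin.castLE hk)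
  rw [← h, submatrix_diagonal _ _ (Fin.castLE_injective hk), det_diagonal, Function.comp_def,
    ← zpow_sum₀ hπ] at hlead
  have := le_of_zpow_mem_zpowSpan hinj hπu hπ hlead
  rw [sum_neg_distrib] at this
  linarith

theorem sum_eq_of_diagonal_eq_mul (hinj : Function.Injective (algebraMap O K))
    (hπu : ¬IsUnit π) (hπ : algebraMap O K π ≠ 0) {ι : Type*} [Fintype ι] [DecidableEq ι]
    {a b c : ι → ℤ} {P Q R : Matrix ι ι O} (hP : IsUnit P.det) (hQ : IsUnit Q.det)
    (hR : IsUnit R.det)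
    (h : diagonal (fun i => algebraMap O K π ^ (-c i)) =
      P.map (algebraMap O K) * diagonal (fun i => algebraMap O K π ^ (-a i)) *
        Q.map (algebraMap O K) * diagonal (fun i => algebraMap O K π ^ (-b i)) *
          R.map (algebraMap O K)) :
    ∑ i, c i = ∑ i, a i + ∑ i, b i := by
  obtain ⟨u, hu⟩ := (hP.mul hQ).mul hR
  have hdet := congrArg det h
  simp only [det_mul, det_diagonal, ← zpow_sum₀ hπ, ← RingHom.mapMatrix_apply,
    ← RingHom.map_det] at hdet
  have key : algebraMap O K π ^ (∑ i, -c i) =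
      algebraMap O K u * algebraMap O K π ^ (∑ i, -a i + ∑ i, -b i) := by
    rw [hdet, hu, zpow_add₀ hπ]
    simp only [map_mul]
    ring
  have := eq_of_zpow_eq_algebraMap_mul_zpow hinj hπu hπ key
  simp only [sum_neg_distrib] at this
  linarith

end Factorization

theorem IsAdaptedBasis.eq_span_zpowSMul {O K V : Type*} [CommRing O] [Field K] [Algebra O K]
    [AddCommGroup V] [Module K V] [Module O V] [IsScalarTower O K V] {π : O} {r : ℕ}
    {M N : Submodule O V} {e : Basis (Fin r) K V} {a : Fin r → ℤ} (h : IsAdaptedBasis π M N e a)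
    (hπ : algebraMap O K π ≠ 0) : N = Submodule.span O (Set.range (e.zpowSMul hπ a)) := by
  rw [h.2, e.coe_zpowSMul]

theorem pos_triangle_dominance_general {O K V : Type*} [CommRing O]
    [Field K] [Algebra O K] [IsFractionRing O K]
    [AddCommGroup V] [Module K V] [Module O V] [IsScalarTower O K V]
    (π : O) (hπ : Irreducible π) {r : ℕ}
    (M₁ M₂ M₃ : Submodule O V)
    (a₁₂ a₂₃ a₁₃ : Fin r → ℤ)
    (h₁₂ : Antitone a₁₂) (h₂₃ : Antitone a₂₃)
    (had₁₂ : ∃ e : Module.Basis (Fin r) K V, IsAdaptedBasis π M₁ M₂ e a₁₂)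
    (had₂₃ : ∃ e : Module.Basis (Fin r) K V, IsAdaptedBasis π M₂ M₃ e a₂₃)
    (had₁₃ : ∃ e : Module.Basis (Fin r) K V, IsAdaptedBasis π M₁ M₃ e a₁₃) :
    (∀ k : ℕ, k ≤ r →
      ∑ i ∈ Finset.univ.filter (fun i : Fin r => (i : ℕ) < k), a₁₃ i ≤
        (∑ i ∈ Finset.univ.filter (fun i : Fin r => (i : ℕ) < k), a₁₂ i) +
          ∑ i ∈ Finset.univ.filter (fun i : Fin r => (i : ℕ) < k), a₂₃ i) ∧
      (∑ i, a₁₃ i) = (∑ i, a₁₂ i) + ∑ i, a₂₃ i := by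
  have hinj := IsFractionRing.injective O K
  have hπ₀ : algebraMap O K π ≠ 0 := (map_ne_zero_iff _ hinj).mpr hπ.ne_zero
  obtain ⟨e, he⟩ := had₁₂
  obtain ⟨f, hf⟩ := had₂₃
  obtain ⟨g, hg⟩ := had₁₃
  obtain ⟨P, hPu, hP⟩ := Basis.exists_isUnit_det_toMatrix_eq_map hinj (hg.1.symm.trans he.1)
  obtain ⟨Q, hQu, hQ⟩ := Basis.exists_isUnit_det_toMatrix_eq_map hinj
    ((he.eq_span_zpowSMul hπ₀).symm.trans hf.1)
  obtain ⟨R, hRu, hR⟩ := Basis.exists_isUnit_det_toMatrix_eq_map hinj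
    ((hf.eq_span_zpowSMul hπ₀).symm.trans (hg.eq_span_zpowSMul hπ₀))
  have hfactor : diagonal (fun i => algebraMap O K π ^ (-a₁₃ i)) =
      P.map (algebraMap O K) * diagonal (fun i => algebraMap O K π ^ (-a₁₂ i)) *
        Q.map (algebraMap O K) * diagonal (fun i => algebraMap O K π ^ (-a₂₃ i)) *
          R.map (algebraMap O K) := by
    rw [← g.toMatrix_zpowSMul hπ₀, ← e.toMatrix_zpowSMul hπ₀, ← f.toMatrix_zpowSMul hπ₀,
      ← hP, ← hQ, ← hR]
    simp only [Basis.toMatrix_mul_toMatrix]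
  refine ⟨fun k hk => ?_, sum_eq_of_diagonal_eq_mul hinj hπ.not_isUnit hπ₀ hPu hQu hRu hfactor⟩
  simp only [Fin.sum_filter_val_lt hk]
  exact sum_castLE_le_of_diagonal_eq_mul hinj hπ.not_isUnit hπ₀ h₁₂ h₂₃ hfactor hk

/-- the relative position of lattices in a vector space over the fraction field of
a discrete valuation ring satisfies the triangle inequality
`Pos(M₁,M₃) ≤ Pos(M₁,M₂) + Pos(M₂,M₃)` in the dominance order. -/
theorem pos_triangle_dominance {O K V : Type*} [CommRing O] [IsDomain O]
    [IsDiscreteValuationRing O] [Field K] [Algebra O K] [IsFractionRing O K]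
    [AddCommGroup V] [Module K V] [Module O V] [IsScalarTower O K V]
    (π : O) (hπ : Irreducible π) {r : ℕ}
    (M₁ M₂ M₃ : Submodule O V)
    (a₁₂ a₂₃ a₁₃ : Fin r → ℤ)
    (h₁₂ : Antitone a₁₂) (h₂₃ : Antitone a₂₃) (h₁₃ : Antitone a₁₃)
    (had₁₂ : ∃ e : Module.Basis (Fin r) K V, IsAdaptedBasis π M₁ M₂ e a₁₂)
    (had₂₃ : ∃ e : Module.Basis (Fin r) K V, IsAdaptedBasis π M₂ M₃ e a₂₃)
    (had₁₃ : ∃ e : Module.Basis (Fin r) K V, IsAdaptedBasis π M₁ M₃ e a₁₃) :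
    (∀ k : ℕ, k ≤ r →
      ∑ i ∈ Finset.univ.filter (fun i : Fin r => (i : ℕ) < k), a₁₃ i ≤
        (∑ i ∈ Finset.univ.filter (fun i : Fin r => (i : ℕ) < k), a₁₂ i) +
          ∑ i ∈ Finset.univ.filter (fun i : Fin r => (i : ℕ) < k), a₂₃ i) ∧
      (∑ i, a₁₃ i) = (∑ i, a₁₂ i) + ∑ i, a₂₃ i :=
  pos_triangle_dominance_general π hπ M₁ M₂ M₃ a₁₂ a₂₃ a₁₃ h₁₂ h₂₃ had₁₂ had₂₃ had₁₃
end

section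
/- Let K be a field, V a finite-dimensional K-vector space, W ⊆ V a subspace, and F_V a ℤ-filtration on V. Let F_W be the induced filtration on W given by F_W^{≥i} = F_V^{≥i} ∩ W, and F_{V/W} the induced filtration on V/W given by the images of the F_V^{≥i}. Then t(F_V) ≤ t(F_W) * t(F_{V/W}) in the dominance order on decreasing integer tuples of length dim_K V, where * denotes concatenation. -/
open Finset Module

/-- Partial sum of the first `k` entries of a tuple indexed by `Fin n`. -/
def partialSumZ {n : ℕ} (t : Fin n → ℤ) (k : ℕ) : ℤ :=
  ∑ j ∈ Finset.univ.filter (fun j : Fin n => (j : ℕ) < k), t j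

/-- The number of entries of the tuple `t` equal to `z` (the multiplicity of `z` in `t`). -/
def tupleCount {n : ℕ} (t : Fin n → ℤ) (z : ℤ) : ℕ :=
  (Finset.univ.filter (fun j : Fin n => t j = z)).card

lemma tupleCount_succ {n : ℕ} (t : Fin (n + 1) → ℤ) (z : ℤ) :
    tupleCount t z = (if t 0 = z then 1 else 0) + tupleCount (t ∘ Fin.succ) z := by
  unfold tupleCount
  rw [Finset.card_filter, Finset.card_filter, Fin.sum_univ_succ]
  rfl

lemma antitone_le_zero_of_counts {n : ℕ} (u v : Fin (n + 1) → ℤ)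
    (hv : Antitone v) (huv : ∀ z, tupleCount u z = tupleCount v z) : u 0 ≤ v 0 := by
  have h1 : 0 < tupleCount v (u 0) := by
    rw [← huv]
    unfold tupleCount
    rw [Finset.card_pos]
    exact ⟨0, by simp⟩
  obtain ⟨j, hj⟩ := Finset.card_pos.mp h1
  simp only [tupleCount, Finset.mem_filter, Finset.mem_univ, true_and] at hj
  calc u 0 = v j := hj.symm
    _ ≤ v 0 := hv (Fin.zero_le j)

lemma antitone_eq_of_counts : ∀ {n : ℕ} (s t : Fin n → ℤ), Antitone s → Antitone t →
    (∀ z, tupleCount s z = tupleCount t z) → s = t := by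
  intro n
  induction n with
  | zero => intro s t _ _ _; funext j; exact j.elim0
  | succ n ih =>
    intro s t hs ht h
    have h0 : s 0 = t 0 :=
      le_antisymm (antitone_le_zero_of_counts s t ht h)
        (antitone_le_zero_of_counts t s hs fun z => (h z).symm)
    have hs' : Antitone (s ∘ Fin.succ) := hs.comp_monotone Fin.strictMono_succ.monotone
    have ht' : Antitone (t ∘ Fin.succ) := ht.comp_monotone Fin.strictMono_succ.monotone
    have h' : ∀ z, tupleCount (s ∘ Fin.succ) z = tupleCount (t ∘ Fin.succ) z := by
      intro z
      have := h z
      rw [tupleCount_succ s z, tupleCount_succ t z, h0] at this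
      split at this <;> omega
    have htail := ih (s ∘ Fin.succ) (t ∘ Fin.succ) hs' ht' h'
    funext j
    refine Fin.cases h0 (fun i => ?_) j
    exact congrFun htail i

/-- For a ℤ-filtration `F` on `V`, a subspace `W ⊆ V`, and the induced filtrations
on `W` and `V/W`, the types satisfy `t(F_V) ≤ t(F_W) * t(F_{V/W})` in the dominance order,
where `*` is concatenation. Types are encoded as decreasing tuples whose multiplicities are the
dimensions of the graded pieces, and the concatenation as a decreasing tuple `c` whose
multiplicities are the sums of those of `t(F_W)` and `t(F_{V/W})`. -/
theorem type_le_type_sub_concat_type_quot {K V : Type*} [Field K] [AddCommGroup V] [Module K V]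
    [FiniteDimensional K V]
    (F : ℤ → Submodule K V) (hF : Antitone F)
    (htop : ∃ N : ℤ, ∀ i ≤ N, F i = ⊤) (hbot : ∃ N : ℤ, ∀ i, N ≤ i → F i = ⊥)
    (W : Submodule K V)
    (tV : Fin (finrank K V) → ℤ) (htV : Antitone tV)
    (htVc : ∀ z : ℤ, tupleCount tV z = finrank K ↥(F z) - finrank K ↥(F (z + 1)))
    (tW : Fin (finrank K ↥W) → ℤ) (htW : Antitone tW)
    (htWc : ∀ z : ℤ, tupleCount tW z =
      finrank K ↥(Submodule.comap W.subtype (F z)) -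
        finrank K ↥(Submodule.comap W.subtype (F (z + 1))))
    (tQ : Fin (finrank K (V ⧸ W)) → ℤ) (htQ : Antitone tQ)
    (htQc : ∀ z : ℤ, tupleCount tQ z =
      finrank K ↥(Submodule.map W.mkQ (F z)) - finrank K ↥(Submodule.map W.mkQ (F (z + 1))))
    (c : Fin (finrank K V) → ℤ) (hc : Antitone c)
    (hcc : ∀ z : ℤ, tupleCount c z = tupleCount tW z + tupleCount tQ z) :
    (∀ k : ℕ, k ≤ finrank K V → partialSumZ tV k ≤ partialSumZ c k) ∧
      partialSumZ tV (finrank K V) = partialSumZ c (finrank K V) := by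
  -- rank-nullity: finrank (F z) = finrank (F z ∩ W) + finrank (image of F z in V/W)
  have key : ∀ z : ℤ, finrank K ↥(F z) =
      finrank K ↥(Submodule.comap W.subtype (F z)) + finrank K ↥(Submodule.map W.mkQ (F z)) := by
    intro z
    have h1 := LinearMap.finrank_range_add_finrank_ker (W.mkQ.comp (F z).subtype)
    have hrange : LinearMap.range (W.mkQ.comp (F z).subtype) = Submodule.map W.mkQ (F z) := by
      rw [LinearMap.range_comp, Submodule.range_subtype]
    have hker : LinearMap.ker (W.mkQ.comp (F z).subtype) = Submodule.comap (F z).subtype W := by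
      rw [LinearMap.ker_comp, Submodule.ker_mkQ]
    rw [hrange, hker] at h1
    have e1 : finrank K ↥(Submodule.comap (F z).subtype W) = finrank K ↥(W ⊓ F z) := by
      have : Submodule.comap (F z).subtype W = Submodule.comap (F z).subtype (W ⊓ F z) := by
        rw [Submodule.comap_inf]
        simp
      rw [this]
      exact (Submodule.comapSubtypeEquivOfLe inf_le_right).finrank_eq
    have e2 : finrank K ↥(Submodule.comap W.subtype (F z)) = finrank K ↥(F z ⊓ W) := by
      have : Submodule.comap W.subtype (F z) = Submodule.comap W.subtype (F z ⊓ W) := by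
        rw [Submodule.comap_inf]
        simp
      rw [this]
      exact (Submodule.comapSubtypeEquivOfLe inf_le_right).finrank_eq
    rw [e1, inf_comm, ← e2] at h1
    omega
  have heq : tV = c := by
    refine antitone_eq_of_counts tV c htV hc fun z => ?_
    have hFle : F (z + 1) ≤ F z := hF (by omega)
    have hdV : finrank K ↥(F (z + 1)) ≤ finrank K ↥(F z) := Submodule.finrank_mono hFle
    have hdW : finrank K ↥(Submodule.comap W.subtype (F (z + 1))) ≤
        finrank K ↥(Submodule.comap W.subtype (F z)) :=
      Submodule.finrank_mono (Submodule.comap_mono hFle)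
    have hdQ : finrank K ↥(Submodule.map W.mkQ (F (z + 1))) ≤
        finrank K ↥(Submodule.map W.mkQ (F z)) :=
      Submodule.finrank_mono (Submodule.map_mono hFle)
    have k1 := key z
    have k2 := key (z + 1)
    rw [htVc z, hcc z, htWc z, htQc z]
    omega
  rw [heq]
  exact ⟨fun k _ => le_refl _, rfl⟩
end

section
/- Let K be a field, V a finite-dimensional K-vector space, and F₁, F₂ two ℤ-filtrations on V. Let Gr_{F₁} V = ⊕_{i∈ℤ} F₁^{≥i}/F₁^{≥i+1}, and let Gr_{F₁}(F₂) be the filtration induced by F₂ on Gr_{F₁} V, given on each graded piece F₁^{≥i}/F₁^{≥i+1} by the images of the subspaces F₂^{≥j} ∩ F₁^{≥i}. Then t(F₂) ≤ t(Gr_{F₁}(F₂)) in the dominance order on decreasing integer tuples of length dim_K V. -/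
open Finset Module

theorem tupleCount_eq_count_ofFn {n : ℕ} (t : Fin n → ℤ) (z : ℤ) :
    tupleCount t z = (List.ofFn t).count z := by
  rw [← Multiset.coe_count, ← Fin.univ_val_map, Multiset.count_map, tupleCount]
  simp only [eq_comm, Finset.card_def, Finset.filter_val]

theorem eq_of_antitone_of_tupleCount_eq {n : ℕ} {t g : Fin n → ℤ} (ht : Antitone t)
    (hg : Antitone g) (h : ∀ z, tupleCount t z = tupleCount g z) : t = g :=
  List.ofFn_injective <| List.Perm.eq_of_sortedGE ht.sortedGE_ofFn hg.sortedGE_ofFn <|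
    List.perm_iff_count.2 fun z => by simp only [← tupleCount_eq_count_ofFn, h]

theorem sum_Icc_sub_succ (f : ℤ → ℤ) {a b : ℤ} (hab : a ≤ b) :
    ∑ i ∈ Icc a b, (f i - f (i + 1)) = f a - f (b + 1) := by
  induction b, hab using Int.leInduction with
  | base => simp
  | succ b hb ih =>
    rw [← insert_Icc_right_eq_Icc_add_one (by omega), sum_insert (by simp), ih]
    ring

namespace Submodule

variable {K V : Type*} [Field K] [AddCommGroup V] [Module K V] [FiniteDimensional K V]

theorem finrank_inf_sup_of_le (W : Submodule K V) {A B : Submodule K V} (hBA : B ≤ A) :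
    (finrank K ↥(W ⊓ A ⊔ B) : ℤ) =
      finrank K ↥(W ⊓ A) - finrank K ↥(W ⊓ B) + finrank K B := by
  have h := finrank_sup_add_finrank_inf_eq (W ⊓ A) B
  rw [inf_assoc, inf_eq_right.2 hBA] at h
  omega

theorem finrank_sub_finrank_eq_sum_graded {F : ℤ → Submodule K V} (hF : Antitone F)
    {a b : ℤ} (hab : a ≤ b) (ha : F a = ⊤) (hb : F (b + 1) = ⊥)
    {W W' : Submodule K V} (hW : W' ≤ W) :
    finrank K W - finrank K W' =
      ∑ i ∈ Icc a b, (finrank K ↥(W ⊓ F i ⊔ F (i + 1)) - finrank K ↥(W' ⊓ F i ⊔ F (i + 1))) := by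
  have hF_succ (i : ℤ) : F (i + 1) ≤ F i := hF (by omega)
  zify [finrank_mono hW,
    fun i => finrank_mono (sup_le_sup_right (inf_le_inf_right (F i) hW) (F (i + 1)))]
  have := sum_Icc_sub_succ (fun i => (finrank K ↥(W ⊓ F i) : ℤ) - finrank K ↥(W' ⊓ F i)) hab
  rw [ha, hb, inf_top_eq, inf_top_eq, inf_bot_eq, inf_bot_eq, finrank_bot,
    Nat.cast_zero, sub_zero, sub_zero] at this
  rw [← this]
  refine sum_congr rfl fun i _ => ?_
  rw [finrank_inf_sup_of_le W (hF_succ i), finrank_inf_sup_of_le W' (hF_succ i)]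
  ring

end Submodule

theorem type_le_type_graded_general {K V : Type*} [Field K] [AddCommGroup V] [Module K V]
    [FiniteDimensional K V]
    (F₁ F₂ : ℤ → Submodule K V) (hF₁ : Antitone F₁) (hF₂ : Antitone F₂)
    (a b : ℤ) (hab : a ≤ b)
    (hF₁top : ∀ i ≤ a, F₁ i = ⊤) (hF₁bot : ∀ i, b ≤ i → F₁ i = ⊥)
    (t₂ : Fin (finrank K V) → ℤ) (ht₂ : Antitone t₂)
    (ht₂c : ∀ z : ℤ, tupleCount t₂ z = finrank K ↥(F₂ z) - finrank K ↥(F₂ (z + 1)))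
    (g : Fin (finrank K V) → ℤ) (hg : Antitone g)
    (hgc : ∀ z : ℤ, tupleCount g z = ∑ i ∈ Finset.Icc a b,
      (finrank K ↥(F₂ z ⊓ F₁ i ⊔ F₁ (i + 1)) - finrank K ↥(F₂ (z + 1) ⊓ F₁ i ⊔ F₁ (i + 1)))) :
    (∀ k : ℕ, k ≤ finrank K V → partialSumZ t₂ k ≤ partialSumZ g k) ∧
      partialSumZ t₂ (finrank K V) = partialSumZ g (finrank K V) := by
  have hcount (z : ℤ) : tupleCount t₂ z = tupleCount g z := by
    rw [ht₂c, hgc, Submodule.finrank_sub_finrank_eq_sum_graded hF₁ hab (hF₁top a le_rfl)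
      (hF₁bot (b + 1) (by omega)) (hF₂ (by omega))]
  obtain rfl := eq_of_antitone_of_tupleCount_eq ht₂ hg hcount
  exact ⟨fun _ _ => le_rfl, rfl⟩

/-- For two ℤ-filtrations `F₁`, `F₂` on a finite-dimensional `K`-vector space `V`,
the type of `F₂` is dominated by the type of the filtration induced by `F₂` on the graded space
`Gr_{F₁} V`: `t(F₂) ≤ t(Gr_{F₁}(F₂))`. The type of `Gr_{F₁}(F₂)` is encoded as a decreasing
tuple `g` in which each `z ∈ ℤ` occurs with multiplicity
`∑ᵢ dim ( image of F₂^{≥z} ∩ F₁^{≥i} in F₁^{≥i}/F₁^{≥i+1} graded piece )`. -/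
theorem type_le_type_graded {K V : Type*} [Field K] [AddCommGroup V] [Module K V]
    [FiniteDimensional K V]
    (F₁ F₂ : ℤ → Submodule K V) (hF₁ : Antitone F₁) (hF₂ : Antitone F₂)
    (a b : ℤ) (hab : a ≤ b)
    (hF₁top : ∀ i ≤ a, F₁ i = ⊤) (hF₁bot : ∀ i, b ≤ i → F₁ i = ⊥)
    (hF₂top : ∃ N : ℤ, ∀ i ≤ N, F₂ i = ⊤) (hF₂bot : ∃ N : ℤ, ∀ i, N ≤ i → F₂ i = ⊥)
    (t₂ : Fin (finrank K V) → ℤ) (ht₂ : Antitone t₂)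
    (ht₂c : ∀ z : ℤ, tupleCount t₂ z = finrank K ↥(F₂ z) - finrank K ↥(F₂ (z + 1)))
    (g : Fin (finrank K V) → ℤ) (hg : Antitone g)
    (hgc : ∀ z : ℤ, tupleCount g z = ∑ i ∈ Finset.Icc a b,
      (finrank K ↥(F₂ z ⊓ F₁ i ⊔ F₁ (i + 1)) - finrank K ↥(F₂ (z + 1) ⊓ F₁ i ⊔ F₁ (i + 1)))) :
    (∀ k : ℕ, k ≤ finrank K V → partialSumZ t₂ k ≤ partialSumZ g k) ∧
      partialSumZ t₂ (finrank K V) = partialSumZ g (finrank K V) :=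
  type_le_type_graded_general F₁ F₂ hF₁ hF₂ a b hab hF₁top hF₁bot t₂ ht₂ ht₂c g hg hgc
end

section
/- Let O be a discrete valuation ring with uniformizer π, fraction field K and residue field k. Let M₁, M₂ be lattices in a finite-dimensional K-vector space V and M₁', M₂' lattices in a finite-dimensional K-vector space V'. Regard M₁ ⊗_O M₁' as a lattice in V ⊗_K V'. Then, under the canonical isomorphism (M₁ ⊗_O M₁')/π(M₁ ⊗_O M₁') ≅ (M₁/πM₁) ⊗_k (M₁'/πM₁'), one has for every i ∈ ℤ: F^i(M₁ ⊗ M₁', M₂ ⊗ M₂') = Σ_{i₁+i₂=i} F^{i₁}(M₁,M₂) ⊗ F^{i₂}(M₁',M₂'). -/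
open Finset TensorProduct Pointwise

/-- `M` is an `O`-lattice in the `K`-vector space `V`. -/
def IsLatticeIn (O K : Type*) {V : Type*} [CommRing O] [Field K] [Algebra O K]
    [AddCommGroup V] [Module K V] [Module O V] [IsScalarTower O K V]
    (M : Submodule O V) : Prop :=
  M.FG ∧ Submodule.span K (M : Set V) = ⊤

/-- The tensor product lattice `M ⊗_O M'` inside `V ⊗_K V'`, i.e. the `O`-span of
the pure tensors `m ⊗ m'` with `m ∈ M`, `m' ∈ M'`. -/
def tensorLattice {O K V V' : Type*} [CommRing O] [Field K] [Algebra O K]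
    [AddCommGroup V] [Module K V] [Module O V] [IsScalarTower O K V]
    [AddCommGroup V'] [Module K V'] [Module O V'] [IsScalarTower O K V']
    (M : Submodule O V) (M' : Submodule O V') : Submodule O (V ⊗[K] V') :=
  Submodule.span O (Set.image2 (fun x y => x ⊗ₜ[K] y) (M : Set V) (M' : Set V'))

/-!
By the elementary divisor theorem over the DVR `O`, two lattices `M₁, M₂` have a common
`K`-basis `e` with `M₁ = ⊕ O e_a` and `M₂ = ⊕ π^{d_a} O e_a` (`diagLattice`). On such lattices
scaling by `π^t`, intersection and tensor product act on the exponents by `+ t`, `max` and `+`.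
So `π^i (M₂ ⊗ M₂') ⊓ (M₁ ⊗ M₁')` is diagonal on `e_a ⊗ e'_b` with exponents
`max (i + d_a + d'_b) 0`, and so is the sum over `j` of `(π^j M₂ ⊓ M₁) ⊗ (π^(i-j) M₂' ⊓ M₁')`,
because `max (j + d_a) 0 + max (i - j + d'_b) 0 ≥ max (i + d_a + d'_b) 0` with equality at
`j = -d_a`. The two sides thus agree even before `π (M₁ ⊗ M₁')` is added.
-/

open Set Submodule

theorem span_range_units_smul {O W ι : Type*} [CommRing O] [AddCommGroup W] [Module O W]
    (u : ι → Oˣ) (v : ι → W) : span O (range fun a => u a • v a) = span O (range v) := by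
  simp only [span_range_eq_iSup, Units.smul_def, span_singleton_smul_eq (u _).isUnit]

section DiagLattice

variable {O K W ι : Type*} [CommRing O] [Field K] [Algebra O K]
  [AddCommGroup W] [Module K W] [Module O W] [IsScalarTower O K W]
  {π : O} {e : Module.Basis ι K W}

def diagLattice (π : O) (e : Module.Basis ι K W) (d : ι → ℤ) : Submodule O W :=
  span O (range fun a => algebraMap O K π ^ d a • e a)

theorem diagLattice_antitone (hπ : algebraMap O K π ≠ 0) : Antitone (diagLattice π e) := by
  intro c' c h
  refine span_le.2 (range_subset_iff.2 fun a => ?_)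
  have hpow : algebraMap O K π ^ c a • e a
      = π ^ (c a - c' a).toNat • (algebraMap O K π ^ c' a • e a) := by
    rw [← algebraMap_smul K (π ^ (c a - c' a).toNat), smul_smul, map_pow, ← zpow_natCast,
      Int.toNat_of_nonneg (sub_nonneg.2 (h a)), ← zpow_add₀ hπ, sub_add_cancel]
  rw [SetLike.mem_coe, hpow]
  exact smul_mem _ _ (subset_span ⟨a, rfl⟩)

theorem zpow_smul_diagLattice (hπ : algebraMap O K π ≠ 0) (t : ℤ) (d : ι → ℤ) :
    algebraMap O K π ^ t • diagLattice π e d = diagLattice π e fun a => t + d a := by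
  simp only [diagLattice, smul_span, smul_set_range, smul_smul, zpow_add₀ hπ]

theorem mem_diagLattice_iff [IsDomain O] [Module.IsTorsionFree O K]
    (hπ : algebraMap O K π ≠ 0) {d : ι → ℤ} {x : W} :
    x ∈ diagLattice π e d ↔
      ∀ a, algebraMap O K π ^ (-d a) * e.repr x a ∈ range (algebraMap O K) := by
  let u : ι → Kˣ := fun a => Units.mk0 _ (zpow_ne_zero (d a) hπ)
  have : diagLattice π e d = span O (range (e.unitsSMul u)) := by
    rw [diagLattice]; congr 2; funext a; rw [e.unitsSMul_apply]; rfl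
  simp only [this, Module.Basis.mem_span_iff_repr_mem, Module.Basis.repr_unitsSMul, u,
    Units.smul_def, Units.val_inv_eq_inv_val, Units.val_mk0, zpow_neg, smul_eq_mul]

theorem diagLattice_inf [IsDomain O] [Module.IsTorsionFree O K] (hπ : algebraMap O K π ≠ 0)
    (c c' : ι → ℤ) : diagLattice π e c ⊓ diagLattice π e c' = diagLattice π e (c ⊔ c') := by
  refine le_antisymm (fun x hx => ?_) (le_inf (diagLattice_antitone hπ le_sup_left)
    (diagLattice_antitone hπ le_sup_right))
  rw [Submodule.mem_inf, mem_diagLattice_iff hπ, mem_diagLattice_iff hπ] at hx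
  rw [mem_diagLattice_iff hπ]
  intro a
  rcases max_choice (c a) (c' a) with h | h
  · rw [Pi.sup_apply, h]; exact hx.1 a
  · rw [Pi.sup_apply, h]; exact hx.2 a

theorem iSup_diagLattice {J : Type*} (hπ : algebraMap O K π ≠ 0) {f : J → ι → ℤ} {g : ι → ℤ}
    (hle : ∀ j, g ≤ f j) (hex : ∀ a, ∃ j, f j a = g a) :
    ⨆ j, diagLattice π e (f j) = diagLattice π e g := by
  refine le_antisymm (iSup_le fun j => diagLattice_antitone hπ (hle j)) ?_
  refine span_le.2 (range_subset_iff.2 fun a => ?_)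
  obtain ⟨j, hj⟩ := hex a
  rw [SetLike.mem_coe, ← hj]
  exact mem_iSup_of_mem j (subset_span ⟨a, rfl⟩)

end DiagLattice

section Tensor

variable {O K V V' ι ι' : Type*} [CommRing O] [Field K] [Algebra O K]
  [AddCommGroup V] [Module K V] [Module O V] [IsScalarTower O K V]
  [AddCommGroup V'] [Module K V'] [Module O V'] [IsScalarTower O K V']

theorem tensorLattice_diagLattice {π : O} (hπ : algebraMap O K π ≠ 0) (e : Module.Basis ι K V)
    (e' : Module.Basis ι' K V') (c : ι → ℤ) (c' : ι' → ℤ) :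
    tensorLattice (diagLattice π e c) (diagLattice π e' c')
      = diagLattice π (e.tensorProduct e') fun p => c p.1 + c' p.2 := by
  have hmk : (fun (x : V) (y : V') => x ⊗ₜ[K] y)
      = fun x y => (TensorProduct.mk K V V').restrictScalars₁₂ O O x y := rfl
  rw [tensorLattice, diagLattice, diagLattice, hmk, ← map₂_eq_span_image2, map₂_span_span,
    image2_range, diagLattice]
  congr 2
  funext p
  simp only [LinearMap.restrictScalars₁₂_apply_apply, mk_apply, smul_tmul', tmul_smul, smul_smul,
    zpow_add₀ hπ, Module.Basis.tensorProduct_apply', mul_comm]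

end Tensor

section AdaptedBasis

variable {O K V : Type*} [CommRing O] [Field K] [Algebra O K] [IsFractionRing O K]
  [AddCommGroup V] [Module K V] [Module O V] [IsScalarTower O K V]

theorem span_range_extendOfIsLattice {ι : Type*} {M : Submodule O V} [IsLattice K M]
    (b : Module.Basis ι O M) : span O (range (b.extendOfIsLattice K)) = M := by
  have : ⇑(b.extendOfIsLattice K) = M.subtype ∘ b := funext (b.extendOfIsLattice_apply K)
  rw [this, range_comp, ← map_span, b.span_eq, Submodule.map_top, range_subtype]

theorem exists_smul_le_of_fg [IsDomain O] [IsPrincipalIdealRing O] (M : Submodule O V)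
    [IsLattice K M] {N : Submodule O V} (hN : N.FG) : ∃ c : Kˣ, c • N ≤ M := by
  let e := (Module.finBasis O M).extendOfIsLattice K
  obtain ⟨s, hs⟩ := hN
  -- `r` is a common denominator of the coordinates of the generators of `N` in a basis of `M`
  obtain ⟨r, hr⟩ := IsLocalization.exist_integer_multiples_of_finite (nonZeroDivisors O)
    fun p : s × Fin (Module.finrank O M) => e.repr p.1 p.2
  refine ⟨Units.mk0 (algebraMap O K r)
    (IsFractionRing.to_map_ne_zero_of_mem_nonZeroDivisors r.2), ?_⟩
  rw [← hs]
  refine (smul_span _ _).trans_le (span_le.2 ?_)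
  rintro _ ⟨x, hx, rfl⟩
  rw [SetLike.mem_coe, ← span_range_extendOfIsLattice (Module.finBasis O M),
    Module.Basis.mem_span_iff_repr_mem]
  intro a
  obtain ⟨o, ho⟩ := hr (⟨x, hx⟩, a)
  refine ⟨o, ho.trans ?_⟩
  beta_reduce
  rw [Units.smul_def, Units.val_mk0, LinearEquiv.map_smul, Finsupp.smul_apply, smul_eq_mul]
  exact Algebra.smul_def _ _

theorem exists_smith_basis_of_le [IsDomain O] [IsPrincipalIdealRing O] (M L : Submodule O V)
    [IsLattice K M] [IsLattice K L] (hLM : L ≤ M) :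
    ∃ (n : ℕ) (e f : Module.Basis (Fin n) K V) (a : Fin n → O),
      span O (range e) = M ∧ span O (range f) = L ∧ ∀ i, f i = a i • e i := by
  have hrank : Module.finrank O (L.comap M.subtype) = Module.finrank O M := by
    rw [(comapSubtypeEquivOfLe hLM).finrank_eq, Module.finrank, Module.finrank,
      IsLattice.rank' K L, IsLattice.rank' K M]
  obtain ⟨bM, a, bL, hbL⟩ := exists_smith_normal_form_of_rank_eq (Module.finBasis O M) hrank
  let bL' := bL.map (comapSubtypeEquivOfLe hLM)
  refine ⟨_, bM.extendOfIsLattice K, bL'.extendOfIsLattice K, a,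
    span_range_extendOfIsLattice bM, span_range_extendOfIsLattice bL', fun i => ?_⟩
  simp [bL', hbL]

theorem exists_basis_diagLattice [IsDomain O] [IsDiscreteValuationRing O] {π : O}
    (hπ : Irreducible π) (M N : Submodule O V) [IsLattice K M] [IsLattice K N] :
    ∃ (n : ℕ) (e : Module.Basis (Fin n) K V) (d : Fin n → ℤ),
      M = diagLattice π e 0 ∧ N = diagLattice π e d := by
  obtain ⟨c, hc⟩ := exists_smul_le_of_fg M (IsLattice.fg (A := K) (M := N))
  obtain ⟨n, e, f, a, hM, hL, hf⟩ := exists_smith_basis_of_le M (c • N) hc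
  have ha : ∀ i, algebraMap O K (a i) ≠ 0 := fun i hi =>
    f.ne_zero i (by rw [hf, ← algebraMap_smul K, hi, zero_smul])
  choose d u hu using fun i => IsDiscreteValuationRing.exists_units_eq_smul_zpow_of_irreducible
    hπ (mul_ne_zero (c⁻¹).ne_zero (ha i))
  refine ⟨n, e, d, by simpa [diagLattice] using hM.symm, ?_⟩
  have hgen : ∀ i, c⁻¹ • f i = u i • (algebraMap O K π ^ d i • e i) := fun i => by
    rw [hf, ← algebraMap_smul K, Units.smul_def, smul_smul, hu, Units.smul_def, Units.smul_def,
      smul_assoc]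
  rw [← inv_smul_smul c N, ← hL]
  refine (smul_span _ _).trans ?_
  rw [smul_set_range]
  simp only [hgen]
  exact span_range_units_smul u _

end AdaptedBasis

theorem filtration_tensor_compat_general {O K V V' : Type*} [CommRing O] [IsDomain O]
    [IsDiscreteValuationRing O] [Field K] [Algebra O K] [IsFractionRing O K]
    [AddCommGroup V] [Module K V] [Module O V] [IsScalarTower O K V]
    [AddCommGroup V'] [Module K V'] [Module O V'] [IsScalarTower O K V']
    (π : O) (hπ : Irreducible π)
    (M₁ M₂ : Submodule O V) (M₁' M₂' : Submodule O V')
    (h₁ : IsLatticeIn O K M₁) (h₂ : IsLatticeIn O K M₂)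
    (h₁' : IsLatticeIn O K M₁') (h₂' : IsLatticeIn O K M₂') (i : ℤ) :
    ((algebraMap O K π) ^ i • tensorLattice M₂ M₂') ⊓ tensorLattice M₁ M₁'
        ⊔ (algebraMap O K π) • tensorLattice M₁ M₁'
      = (⨆ j : ℤ, Submodule.span O (Set.image2 (fun x y => x ⊗ₜ[K] y)
            ((((algebraMap O K π) ^ j • M₂) ⊓ M₁ : Submodule O V) : Set V)
            ((((algebraMap O K π) ^ (i - j) • M₂') ⊓ M₁' : Submodule O V') : Set V')))
          ⊔ (algebraMap O K π) • tensorLattice M₁ M₁' := by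
  have : IsLattice K M₁ := ⟨h₁.1, h₁.2⟩
  have : IsLattice K M₂ := ⟨h₂.1, h₂.2⟩
  have : IsLattice K M₁' := ⟨h₁'.1, h₁'.2⟩
  have : IsLattice K M₂' := ⟨h₂'.1, h₂'.2⟩
  have hπ₀ : algebraMap O K π ≠ 0 := by simpa using hπ.ne_zero
  obtain ⟨n, e, d, rfl, rfl⟩ := exists_basis_diagLattice hπ M₁ M₂
  obtain ⟨n', e', d', rfl, rfl⟩ := exists_basis_diagLattice hπ M₁' M₂'
  congr 1
  simp only [← tensorLattice.eq_1, zpow_smul_diagLattice hπ₀, diagLattice_inf hπ₀,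
    tensorLattice_diagLattice hπ₀]
  refine (iSup_diagLattice hπ₀ (fun j p => ?_) fun p => ⟨-d p.1, ?_⟩).symm <;>
    simp only [Pi.sup_apply, Pi.zero_apply] <;> omega

/-- compatibility of the filtration `F(·,·)` associated to a pair of lattices
with tensor products: under the canonical identification of `(M₁ ⊗ M₁')/π(M₁ ⊗ M₁')` with
`(M₁/πM₁) ⊗ (M₁'/πM₁')`, one has
`F^i(M₁ ⊗ M₁', M₂ ⊗ M₂') = ∑_{i₁+i₂=i} F^{i₁}(M₁,M₂) ⊗ F^{i₂}(M₁',M₂')`.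
Both sides are stated via their preimages in `M₁ ⊗ M₁'` (which contain `π·(M₁ ⊗ M₁')`). -/
theorem filtration_tensor_compat {O K V V' : Type*} [CommRing O] [IsDomain O]
    [IsDiscreteValuationRing O] [Field K] [Algebra O K] [IsFractionRing O K]
    [AddCommGroup V] [Module K V] [Module O V] [IsScalarTower O K V] [FiniteDimensional K V]
    [AddCommGroup V'] [Module K V'] [Module O V'] [IsScalarTower O K V'] [FiniteDimensional K V']
    (π : O) (hπ : Irreducible π)
    (M₁ M₂ : Submodule O V) (M₁' M₂' : Submodule O V')
    (h₁ : IsLatticeIn O K M₁) (h₂ : IsLatticeIn O K M₂)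
    (h₁' : IsLatticeIn O K M₁') (h₂' : IsLatticeIn O K M₂') (i : ℤ) :
    ((algebraMap O K π) ^ i • tensorLattice M₂ M₂') ⊓ tensorLattice M₁ M₁'
        ⊔ (algebraMap O K π) • tensorLattice M₁ M₁'
      = (⨆ j : ℤ, Submodule.span O (Set.image2 (fun x y => x ⊗ₜ[K] y)
            ((((algebraMap O K π) ^ j • M₂) ⊓ M₁ : Submodule O V) : Set V)
            ((((algebraMap O K π) ^ (i - j) • M₂') ⊓ M₁' : Submodule O V') : Set V')))
          ⊔ (algebraMap O K π) • tensorLattice M₁ M₁' :=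
  filtration_tensor_compat_general π hπ M₁ M₂ M₁' M₂' h₁ h₂ h₁' h₂' i
end

section
/- Let p be a prime, 𝕂 an algebraically closed field of characteristic p, and let σ : W(𝕂) → W(𝕂) be the Frobenius ring endomorphism of the ring of Witt vectors (the lift of x ↦ x^p). Then for every s ≥ 1 the map x ↦ σ^s(x)·x^{−1} is surjective on the group of units W(𝕂)^×: for every unit c ∈ W(𝕂)^× there exists a unit x ∈ W(𝕂)^× with σ^s(x) = c·x. -/
/-!
Solve `σ^s x = c * x` coefficient by coefficient, with `q = p ^ s`. In characteristic `p` the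
`n`-th coefficient of `σ^s x` is `x n ^ q`, while the `n`-th coefficient of `c * x` is
`c 0 ^ p ^ n * x n` plus terms involving only `x 0, …, x (n - 1)`. So each coefficient of `x` is a
root of a polynomial `X ^ q - a X - b` of degree `q > 1` over the algebraically closed field,
and the zeroth one, `x 0 ^ (q - 1) = c 0`, can be chosen nonzero, which makes `x` a unit.
-/

def prefixRec {α : Type*} (x₀ : α) (next : ∀ n, (Fin (n + 1) → α) → α) : ℕ → α
  | 0 => x₀
  | n + 1 => next n fun i ↦ prefixRec x₀ next i

section prefixRec

variable {α : Type*} (x₀ : α) (next : ∀ n, (Fin (n + 1) → α) → α)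

@[simp]
theorem prefixRec_zero : prefixRec x₀ next 0 = x₀ := by
  rw [prefixRec]

@[simp]
theorem prefixRec_succ (n : ℕ) :
    prefixRec x₀ next (n + 1) = next n fun i ↦ prefixRec x₀ next i := by
  rw [prefixRec]

end prefixRec

namespace IsAlgClosed

variable {k : Type*} [Field k] [IsAlgClosed k]

open Polynomial in
theorem exists_pow_eq_mul_add {q : ℕ} (hq : 1 < q) (a b : k) : ∃ x : k, x ^ q = a * x + b := by
  have hdeg : (X ^ q - (C a * X + C b) : Polynomial k).degree = q := by
    rw [degree_sub_eq_left_of_degree_lt] <;> rw [degree_X_pow]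
    exact degree_linear_le.trans_lt (mod_cast hq)
  obtain ⟨x, hx⟩ := exists_root _ (by rw [hdeg]; exact_mod_cast (by omega : q ≠ 0))
  refine ⟨x, ?_⟩
  simpa [sub_eq_zero] using hx

theorem exists_ne_zero_pow_eq_mul {q : ℕ} (hq : 1 < q) {a : k} (ha : a ≠ 0) :
    ∃ x : k, x ≠ 0 ∧ x ^ q = a * x := by
  obtain ⟨x, hx⟩ := exists_pow_nat_eq a (by omega : 0 < q - 1)
  refine ⟨x, fun h ↦ ha (by rw [← hx, h, zero_pow (by omega)]), ?_⟩
  rw [← hx, ← pow_succ, Nat.sub_add_cancel hq.le]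

end IsAlgClosed

namespace WittVector

variable (p : ℕ)

theorem truncateFun_mk {R : Type*} [CommRing R] (n : ℕ) (f : ℕ → R) :
    truncateFun n (mk p f) = TruncatedWittVector.mk p fun i : Fin n ↦ f i := by
  ext i
  rw [coeff_truncateFun, TruncatedWittVector.coeff_mk, coeff_mk]

variable [hp : Fact p.Prime]

theorem coeff_iterate_frobenius {R : Type*} [CommRing R] [CharP R p] (s : ℕ) (x : WittVector p R)
    (n : ℕ) : ((⇑(frobenius (p := p) (R := R)))^[s] x).coeff n = x.coeff n ^ p ^ s := by
  induction s generalizing x with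
  | zero => simp
  | succ s ih => rw [Function.iterate_succ_apply, ih, coeff_frobenius_charP, ← pow_mul, pow_succ']

variable {p} {k : Type*} [Field k] [IsAlgClosed k] [CharP k p]

theorem exists_iterate_frobenius_eq_mul {c : WittVector p k} (hc : c.coeff 0 ≠ 0) {s : ℕ}
    (hs : 1 ≤ s) : ∃ x : WittVector p k, x.coeff 0 ≠ 0 ∧
      (⇑(frobenius (p := p) (R := k)))^[s] x = c * x := by
  have hq : 1 < p ^ s := Nat.one_lt_pow (by omega) hp.out.one_lt
  obtain ⟨x₀, hx₀, hx₀c⟩ := IsAlgClosed.exists_ne_zero_pow_eq_mul hq hc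
  choose next hnext using fun n (xs : Fin (n + 1) → k) ↦
    IsAlgClosed.exists_pow_eq_mul_add hq (c.coeff 0 ^ p ^ (n + 1))
      (c.coeff (n + 1) * xs 0 ^ p ^ (n + 1) +
        nthRemainder p n (truncateFun (n + 1) c) (TruncatedWittVector.mk p xs))
  refine ⟨mk p (prefixRec x₀ next), by simpa using hx₀, ?_⟩
  ext (_ | n)
  · rw [coeff_iterate_frobenius, mul_coeff_zero, coeff_mk, prefixRec_zero]
    exact hx₀c
  · rw [coeff_iterate_frobenius, nthRemainder_spec, truncateFun_mk]
    have h := hnext n fun i ↦ prefixRec x₀ next i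
    simp only [Fin.val_zero, prefixRec_zero] at h
    simp only [coeff_mk, prefixRec_zero, prefixRec_succ]
    linear_combination h

end WittVector

/-- for `𝕂` algebraically closed of characteristic `p` and `σ` the Witt vector
Frobenius, the map `x ↦ σ^s(x)·x⁻¹` is surjective on units of `W(𝕂)`: for every unit `c`
there is a unit `x` with `σ^s(x) = c·x`. -/
theorem wittVector_frobenius_units_surjective (p : ℕ) [Fact p.Prime]
    (𝕂 : Type*) [Field 𝕂] [IsAlgClosed 𝕂] [CharP 𝕂 p]
    (s : ℕ) (hs : 1 ≤ s) (c : (WittVector p 𝕂)ˣ) :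
    ∃ x : (WittVector p 𝕂)ˣ,
      (⇑(WittVector.frobenius (p := p) (R := 𝕂)))^[s] (x : WittVector p 𝕂)
        = (c : WittVector p 𝕂) * (x : WittVector p 𝕂) := by
  have hc : (c : WittVector p 𝕂).coeff 0 ≠ 0 := (c.isUnit.map WittVector.constantCoeff).ne_zero
  obtain ⟨x, hx₀, hx⟩ := WittVector.exists_iterate_frobenius_eq_mul hc hs
  exact ⟨(WittVector.isUnit_of_coeff_zero_ne_zero x hx₀).unit, hx⟩
end
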